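/- Let γ, β, k, c₁, c₂ be real numbers. Define U₀(t,x,y) = c₁·y² − c₂·x², and recursively U_{n+1}(t,x,y) = U_n(t,x,y) − ∫₀ᵗ ( ∂U_n/∂s(s,x,y) + (γ/2)·x²·∂²U_n/∂x²(s,x,y) + (β/2)·y²·∂²U_n/∂y²(s,x,y) − k·x·y ) ds. Then for every n ≥ 1 and all t,x,y ∈ ℝ, U_n(t,x,y) = c₁·y²·( Σ_{j=0}^{n} (−β·t)^j / j! ) − c₂·x²·( Σ_{j=0}^{n} (−γ·t)^j / j! ) + k·x·y·t, and consequently lim_{n→∞} U_n(t,x,y) = c₁·y²·exp(−β·t) − c₂·x²·exp(−γ·t) + k·x·y·t. -/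

import Mathlib

open Filter intervalIntegral

/-!
On functions of the form `c₁ y² p(t) − c₂ x² q(t) + a x y t` the operators `x² ∂ₓ²` and `y² ∂ᵧ²`
multiply the quadratic terms by `2` and kill the last one, and the time-derivative term of the correction
integrates back to `U_n(t) − U_n(0)`. Hence one VIM step is Picard's step `p ↦ 1 − β ∫₀ᵗ p` for
`p' = −β p` (and likewise for `q`), which maps the Taylor polynomial of degree `n` of `exp (−β t)`
to the one of degree `n + 1`, while the source term fixes `a = k`. Starting from `U₀`, the case
`p = q = 1`, `a = 0`, the iterates are these Taylor polynomials and converge to the exponentials.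
-/

noncomputable def expPartialSum (n : ℕ) (u : ℝ) : ℝ :=
  ∑ j ∈ Finset.range (n + 1), u ^ j / j.factorial

theorem expPartialSum_succ (n : ℕ) (u : ℝ) :
    expPartialSum (n + 1) u = expPartialSum n u + u ^ (n + 1) / (n + 1).factorial :=
  Finset.sum_range_succ _ _

@[simp]
theorem expPartialSum_zero_left (u : ℝ) : expPartialSum 0 u = 1 := by
  simp [expPartialSum]

@[simp]
theorem expPartialSum_zero_right (n : ℕ) : expPartialSum n 0 = 1 := by
  simp [expPartialSum, Finset.sum_range_succ']

@[fun_prop]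
theorem contDiff_expPartialSum (n : ℕ) {m : WithTop ℕ∞} : ContDiff ℝ m (expPartialSum n) := by
  unfold expPartialSum; fun_prop

theorem hasDerivAt_expPartialSum_succ (n : ℕ) (u : ℝ) :
    HasDerivAt (expPartialSum (n + 1)) (expPartialSum n u) u := by
  induction n with
  | zero =>
    have h : expPartialSum 1 = fun v => 1 + v := by
      ext v; simp [expPartialSum, Finset.sum_range_succ]
    simpa [h] using (hasDerivAt_id u).const_add 1
  | succ n ih =>
    rw [funext (expPartialSum_succ (n + 1))]
    refine (ih.fun_add ((hasDerivAt_pow (n + 2) u).div_const _)).congr_deriv ?_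
    rw [expPartialSum_succ, Nat.factorial_succ (n + 1)]
    push_cast
    field_simp
    ring

theorem tendsto_expPartialSum (u : ℝ) :
    Tendsto (fun n => expPartialSum n u) atTop (nhds (Real.exp u)) := by
  have hs : HasSum (fun j : ℕ => u ^ j / j.factorial) (Real.exp u) := by
    rw [Real.exp_eq_exp_ℝ]
    exact NormedSpace.expSeries_div_hasSum_exp u
  exact hs.tendsto_sum_nat.comp (tendsto_add_atTop_nat 1)

theorem deriv_deriv_quadratic (A B C x : ℝ) :
    deriv (deriv fun z => A + B * z ^ 2 + C * z) x = 2 * B := by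
  have h (z : ℝ) : HasDerivAt (fun z => A + B * z ^ 2 + C * z) (B * (2 * z) + C) z := by
    simpa using (((hasDerivAt_pow 2 z).const_mul B).const_add A).fun_add (hasDerivAt_const_mul C)
  rw [funext fun z => (h z).deriv]
  exact ((hasDerivAt_const_mul 2).const_mul B |>.add_const C).deriv.trans (by ring)

noncomputable def vimCorrection (γ β k : ℝ) (u : ℝ → ℝ → ℝ → ℝ) (t x y : ℝ) : ℝ :=
  u t x y - ∫ s in (0 : ℝ)..t,
    (deriv (fun s' : ℝ => u s' x y) s
      + (γ / 2) * x ^ 2 * deriv (deriv (fun z : ℝ => u s z y)) x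
      + (β / 2) * y ^ 2 * deriv (deriv (fun z : ℝ => u s x z)) y
      - k * x * y)

noncomputable def vimClosedForm (γ β a c₁ c₂ : ℝ) (n : ℕ) (t x y : ℝ) : ℝ :=
  c₁ * y ^ 2 * expPartialSum n (-β * t) - c₂ * x ^ 2 * expPartialSum n (-γ * t) + a * x * y * t

section ClosedForm

variable (γ β a c₁ c₂ : ℝ) (n : ℕ)

@[simp]
theorem vimClosedForm_zero_time (x y : ℝ) :
    vimClosedForm γ β a c₁ c₂ n 0 x y = c₁ * y ^ 2 - c₂ * x ^ 2 := by
  simp [vimClosedForm]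

@[fun_prop]
theorem contDiff_vimClosedForm_time (x y : ℝ) {m : WithTop ℕ∞} :
    ContDiff ℝ m fun t => vimClosedForm γ β a c₁ c₂ n t x y := by
  unfold vimClosedForm; fun_prop

theorem deriv_deriv_vimClosedForm_x (t x y : ℝ) :
    deriv (deriv fun z => vimClosedForm γ β a c₁ c₂ n t z y) x =
      -2 * c₂ * expPartialSum n (-γ * t) := by
  have h : (fun z => vimClosedForm γ β a c₁ c₂ n t z y) = fun z =>
      c₁ * y ^ 2 * expPartialSum n (-β * t) + -(c₂ * expPartialSum n (-γ * t)) * z ^ 2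
        + a * y * t * z := by
    ext z; unfold vimClosedForm; ring
  rw [h, deriv_deriv_quadratic]; ring

theorem deriv_deriv_vimClosedForm_y (t x y : ℝ) :
    deriv (deriv fun z => vimClosedForm γ β a c₁ c₂ n t x z) y =
      2 * c₁ * expPartialSum n (-β * t) := by
  have h : (fun z => vimClosedForm γ β a c₁ c₂ n t x z) = fun z =>
      -(c₂ * x ^ 2 * expPartialSum n (-γ * t)) + c₁ * expPartialSum n (-β * t) * z ^ 2
        + a * x * t * z := by
    ext z; unfold vimClosedForm; ring
  rw [h, deriv_deriv_quadratic]; ring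

theorem hasDerivAt_vimClosedForm_succ_time (t x y : ℝ) :
    HasDerivAt (fun s => vimClosedForm γ β a c₁ c₂ (n + 1) s x y)
      (-(β * c₁ * y ^ 2 * expPartialSum n (-β * t) - γ * c₂ * x ^ 2 * expPartialSum n (-γ * t))
        + a * x * y) t := by
  have hexp (b : ℝ) : HasDerivAt (fun s => expPartialSum (n + 1) (-b * s))
      (expPartialSum n (-b * t) * -b) t :=
    (hasDerivAt_expPartialSum_succ n _).comp t (hasDerivAt_const_mul (-b))
  have h := (((hexp β).const_mul (c₁ * y ^ 2)).fun_sub ((hexp γ).const_mul (c₂ * x ^ 2))).fun_add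
    (hasDerivAt_const_mul (a * x * y))
  exact h.congr_deriv (by ring)

theorem tendsto_vimClosedForm (t x y : ℝ) :
    Tendsto (fun n => vimClosedForm γ β a c₁ c₂ n t x y) atTop
      (nhds (c₁ * y ^ 2 * Real.exp (-β * t) - c₂ * x ^ 2 * Real.exp (-γ * t) + a * x * y * t)) :=
  (((tendsto_expPartialSum _).const_mul _).sub ((tendsto_expPartialSum _).const_mul _)).add_const _

end ClosedForm

theorem vimCorrection_vimClosedForm (γ β k a c₁ c₂ : ℝ) (n : ℕ) :
    vimCorrection γ β k (vimClosedForm γ β a c₁ c₂ n) = vimClosedForm γ β k c₁ c₂ (n + 1) := by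
  ext t x y
  set F := fun s => vimClosedForm γ β a c₁ c₂ n s x y with hF
  set G := fun s => vimClosedForm γ β k c₁ c₂ (n + 1) s x y with hG
  have hFc : ContDiff ℝ 1 F := contDiff_vimClosedForm_time γ β a c₁ c₂ n x y
  have hFG : ContDiff ℝ 1 fun s => F s - G s := by rw [hF, hG]; fun_prop
  have hintegrand : (fun s => deriv F s
      + (γ / 2) * x ^ 2 * deriv (deriv fun z => vimClosedForm γ β a c₁ c₂ n s z y) x
      + (β / 2) * y ^ 2 * deriv (deriv fun z => vimClosedForm γ β a c₁ c₂ n s x z) y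
      - k * x * y) = deriv fun s => F s - G s := by
    ext s
    have hG' := hasDerivAt_vimClosedForm_succ_time γ β k c₁ c₂ n s x y
    rw [deriv_deriv_vimClosedForm_x, deriv_deriv_vimClosedForm_y,
      deriv_fun_sub (hFc.differentiable one_ne_zero s) hG'.differentiableAt, hG'.deriv]
    ring
  have hFTC : ∫ s in (0 : ℝ)..t, deriv (fun s => F s - G s) s = (F t - G t) - (F 0 - G 0) :=
    integral_deriv_eq_sub (fun s _ => hFG.differentiable one_ne_zero s)
      ((hFG.continuous_deriv le_rfl).intervalIntegrable _ _)
  rw [vimCorrection, hintegrand, hFTC]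
  simp [F, G]

/-- Closed form and limit of the VIM iterates for the two-dimensional heat-like
equation `U_t + (γ/2)x²U_xx + (β/2)y²U_yy = kxy` with initial approximation
`U₀(t,x,y) = c₁y² − c₂x²`. -/
theorem stmt5 (γ β k c₁ c₂ : ℝ) (U : ℕ → ℝ → ℝ → ℝ → ℝ)
    (h0 : ∀ t x y : ℝ, U 0 t x y = c₁ * y ^ 2 - c₂ * x ^ 2)
    (hrec : ∀ n : ℕ, ∀ t x y : ℝ,
      U (n + 1) t x y = U n t x y -
        ∫ s in (0 : ℝ)..t,
          (deriv (fun s' : ℝ => U n s' x y) s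
            + (γ / 2) * x ^ 2 * deriv (deriv (fun z : ℝ => U n s z y)) x
            + (β / 2) * y ^ 2 * deriv (deriv (fun z : ℝ => U n s x z)) y
            - k * x * y)) :
    (∀ n : ℕ, 1 ≤ n → ∀ t x y : ℝ,
      U n t x y =
        c₁ * y ^ 2 * (∑ j ∈ Finset.range (n + 1), (-β * t) ^ j / (j.factorial : ℝ))
          - c₂ * x ^ 2 * (∑ j ∈ Finset.range (n + 1), (-γ * t) ^ j / (j.factorial : ℝ))
          + k * x * y * t)
    ∧ (∀ t x y : ℝ,
      Tendsto (fun n : ℕ => U n t x y) atTop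
        (nhds (c₁ * y ^ 2 * Real.exp (-β * t)
          - c₂ * x ^ 2 * Real.exp (-γ * t) + k * x * y * t))) := by
  have hstep (n : ℕ) : U (n + 1) = vimCorrection γ β k (U n) :=
    funext fun t => funext fun x => funext fun y => hrec n t x y
  have hU0 : U 0 = vimClosedForm γ β 0 c₁ c₂ 0 := by
    ext t x y; simp [h0, vimClosedForm]
  have hclosed (n : ℕ) (hn : 1 ≤ n) : U n = vimClosedForm γ β k c₁ c₂ n := by
    induction n, hn using Nat.le_induction with
    | base => rw [hstep, hU0, vimCorrection_vimClosedForm]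
    | succ n _ ih => rw [hstep, ih, vimCorrection_vimClosedForm]
  refine ⟨fun n hn t x y => by rw [hclosed n hn]; rfl, fun t x y => ?_⟩
  refine (tendsto_vimClosedForm γ β k c₁ c₂ t x y).congr' ?_
  filter_upwards [eventually_ge_atTop 1] with n hn
  rw [hclosed n hn]
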